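/- Let n ≥ 6 and let 𝒮₇ be a primitive nonpowerful signed digraph whose underlying digraph is F₇, in which all cycles of length n−1 have the same sign and all cycles of length n−2 have the same sign. Then l_{𝒮₇}(k) = l_{𝒮₇}(v_k) = 2n²−8n+7+k for every 1 ≤ k ≤ n. -/

import Mathlib

/-- `f : ℕ → V` traces a directed walk of length `t` in the digraph with
adjacency relation `A` if consecutive vertices are joined by arcs. -/
def IsWalk {V : Type*} (A : V → V → Prop) (t : ℕ) (f : ℕ → V) : Prop :=
  ∀ i < t, A (f i) (f (i + 1))

/-- There is a directed walk of length `t` from `u` to `v`. -/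
def HasWalk {V : Type*} (A : V → V → Prop) (t : ℕ) (u v : V) : Prop :=
  ∃ f : ℕ → V, f 0 = u ∧ f t = v ∧ IsWalk A t f

/-- A digraph is strongly connected if every vertex can reach every vertex. -/
def StronglyConnected {V : Type*} (A : V → V → Prop) : Prop :=
  ∀ u v : V, ∃ t : ℕ, HasWalk A t u v

/-- A digraph is primitive if it is strongly connected and for some `t > 0`
there are directed walks of length `t` between every ordered pair of vertices. -/
def IsPrimitive {V : Type*} (A : V → V → Prop) : Prop :=
  StronglyConnected A ∧ ∃ t : ℕ, 0 < t ∧ ∀ u v : V, HasWalk A t u v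

/-- The local exponent at `u`: the least `l` such that for every `t ≥ l` and
every vertex `v` there is a directed walk of length `t` from `u` to `v`. -/
noncomputable def localExp {V : Type*} (A : V → V → Prop) (u : V) : ℕ :=
  sInf {l : ℕ | ∀ t ≥ l, ∀ v : V, HasWalk A t u v}

/-- `kthSmallest f k` is the `k`-th smallest element (1-indexed) of the
multiset of values of `f`. -/
noncomputable def kthSmallest {n : ℕ} (f : Fin n → ℕ) (k : ℕ) : ℕ :=
  (Multiset.sort (Finset.univ.val.map f) (· ≤ ·)).getD (k - 1) 0

/-- A directed cycle of length `c` (a closed walk whose first `c` vertices are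
pairwise distinct), given by its vertex function. -/
def IsCycle {V : Type*} (A : V → V → Prop) (c : ℕ) (f : ℕ → V) : Prop :=
  IsWalk A c f ∧ f c = f 0 ∧ ∀ i < c, ∀ j < c, f i = f j → i = j

/-- A signed digraph: each arc carries a sign `+1` or `-1`. -/
structure SignedDigraph (V : Type*) where
  Adj : V → V → Prop
  sgn : V → V → ℤ
  sgn_unit : ∀ u v : V, Adj u v → sgn u v = 1 ∨ sgn u v = -1

namespace SignedDigraph

variable {V : Type*} (S : SignedDigraph V)

/-- The sign of the walk of length `t` traced by `f`. -/
def walkSign (t : ℕ) (f : ℕ → V) : ℤ :=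
  ∏ i ∈ Finset.range t, S.sgn (f i) (f (i + 1))

/-- There is a pair of SSSD walks of length `t` from `u` to `v`: two walks with
the same endpoints and the same length but different signs. -/
def HasSSSD (t : ℕ) (u v : V) : Prop :=
  ∃ f g : ℕ → V,
    (f 0 = u ∧ f t = v ∧ IsWalk S.Adj t f) ∧
    (g 0 = u ∧ g t = v ∧ IsWalk S.Adj t g) ∧
    S.walkSign t f ≠ S.walkSign t g

/-- A signed digraph is primitive and nonpowerful if from some length on there
are SSSD walk pairs between all ordered pairs of vertices. -/
def IsPrimitiveNonpowerful : Prop :=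
  ∃ l : ℕ, 0 < l ∧ ∀ t ≥ l, ∀ u v : V, S.HasSSSD t u v

/-- The local base at vertex `u`: the least `l` such that for every `t ≥ l` and
every vertex `v` there is a pair of SSSD walks of length `t` from `u` to `v`. -/
noncomputable def localBase (u : V) : ℕ :=
  sInf {l : ℕ | ∀ t ≥ l, ∀ v : V, S.HasSSSD t u v}

/-- All directed cycles of length `c` in `S` have the same sign. -/
def SameSignCycles (c : ℕ) : Prop :=
  ∀ f g : ℕ → V, IsCycle S.Adj c f → IsCycle S.Adj c g →
    S.walkSign c f = S.walkSign c g

end SignedDigraph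

/-- Isomorphism of digraphs. -/
def DigraphIso {V W : Type*} (A : V → V → Prop) (B : W → W → Prop) : Prop :=
  ∃ e : V ≃ W, ∀ u v : V, A u v ↔ B (e u) (e v)

/-- The Hamilton cycle `Cₙ` on `v₁,…,vₙ` (here `vⱼ` is the vertex with 0-based
index `j-1`), with arcs `v₁ → vₙ` and `vⱼ → v_{j-1}` for `2 ≤ j ≤ n`. -/
def CnAdj (n : ℕ) : Fin n → Fin n → Prop := fun a b =>
  (a.val = 0 ∧ b.val = n - 1) ∨ a.val = b.val + 1

/-- The digraph `D_{k,i}`: the Hamilton cycle `Cₙ` together with the arcs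
`vⱼ → v_{n-k+j-1}` for `1 ≤ j ≤ i`. -/
def DkiAdj (n k i : ℕ) : Fin n → Fin n → Prop := fun a b =>
  CnAdj n a b ∨ ∃ j : ℕ, 1 ≤ j ∧ j ≤ i ∧ a.val = j - 1 ∧ b.val = n - k + j - 2

/-- The digraph `𝓛`: `Cₙ` together with the arcs `v₁ → v_{n-2}` and `v₃ → vₙ`. -/
def LAdj (n : ℕ) : Fin n → Fin n → Prop := fun a b =>
  CnAdj n a b ∨ (a.val = 0 ∧ b.val = n - 3) ∨ (a.val = 2 ∧ b.val = n - 1)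

/-- The digraph `F`: the `(n-1)`-cycle `v₁ → vₙ → v_{n-1} → v_{n-3} → ⋯ → v₂ → v₁`
together with the arcs `v₁ → v_{n-2}` and `v_{n-2} → v_{n-3}`. -/
def FAdj (n : ℕ) : Fin n → Fin n → Prop := fun a b =>
  (a.val = 0 ∧ b.val = n - 1) ∨ (a.val = n - 1 ∧ b.val = n - 2) ∨
  (a.val = n - 2 ∧ b.val = n - 4) ∨ (a.val = b.val + 1 ∧ 1 ≤ a.val ∧ a.val ≤ n - 4) ∨
  (a.val = 0 ∧ b.val = n - 3) ∨ (a.val = n - 3 ∧ b.val = n - 4)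

/-- The digraph `F₁`: the `(n-1)`-cycle `v₁ → v_{n-1} → v_{n-2} → ⋯ → v₂ → v₁`
together with the arcs `v₁ → v_{n-2}`, `v₂ → vₙ` and `vₙ → v_{n-1}`. -/
def F1Adj (n : ℕ) : Fin n → Fin n → Prop := fun a b =>
  (a.val = 0 ∧ b.val = n - 2) ∨ (a.val = b.val + 1 ∧ 1 ≤ a.val ∧ a.val ≤ n - 2) ∨
  (a.val = 0 ∧ b.val = n - 3) ∨ (a.val = 1 ∧ b.val = n - 1) ∨ (a.val = n - 1 ∧ b.val = n - 2)

/-- The digraph `F₂`: the `(n-1)`-cycle `v₁ → vₙ → v_{n-2} → v_{n-3} → ⋯ → v₂ → v₁`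
together with the arcs `v₁ → v_{n-2}`, `vₙ → v_{n-1}` and `v_{n-1} → v_{n-3}`. -/
def F2Adj (n : ℕ) : Fin n → Fin n → Prop := fun a b =>
  (a.val = 0 ∧ b.val = n - 1) ∨ (a.val = n - 1 ∧ b.val = n - 3) ∨
  (a.val = b.val + 1 ∧ 1 ≤ a.val ∧ a.val ≤ n - 3) ∨
  (a.val = 0 ∧ b.val = n - 3) ∨ (a.val = n - 1 ∧ b.val = n - 2) ∨ (a.val = n - 2 ∧ b.val = n - 4)

/-- The digraph `F₃`: the `(n-2)`-cycle `v₁ → v_{n-2} → v_{n-3} → ⋯ → v₂ → v₁`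
together with the arcs `v₁ → v_{n-1}`, `v_{n-1} → v_{n-2}`, `v₁ → vₙ` and `vₙ → v_{n-2}`. -/
def F3Adj (n : ℕ) : Fin n → Fin n → Prop := fun a b =>
  (a.val = 0 ∧ b.val = n - 3) ∨ (a.val = b.val + 1 ∧ 1 ≤ a.val ∧ a.val ≤ n - 3) ∨
  (a.val = 0 ∧ b.val = n - 2) ∨ (a.val = n - 2 ∧ b.val = n - 3) ∨
  (a.val = 0 ∧ b.val = n - 1) ∨ (a.val = n - 1 ∧ b.val = n - 3)

/-- The digraph `F₇`: the `(n-1)`-cycle `v₁ → v_{n-1} → v_{n-2} → ⋯ → v₂ → v₁`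
together with the arcs `v₁ → v_{n-2}`, `v₃ → vₙ` and `vₙ → v_{n-1}`. -/
def F7Adj (n : ℕ) : Fin n → Fin n → Prop := fun a b =>
  (a.val = 0 ∧ b.val = n - 2) ∨ (a.val = b.val + 1 ∧ 1 ≤ a.val ∧ a.val ≤ n - 2) ∨
  (a.val = 0 ∧ b.val = n - 3) ∨ (a.val = 2 ∧ b.val = n - 1) ∨ (a.val = n - 1 ∧ b.val = n - 2)

/-- The digraph `F'ᵢ` (for `2 ≤ i ≤ n-3`): the `(n-1)`-cycle
`v₁ → v_{n-1} → v_{n-2} → ⋯ → v₂ → v₁` together with the arcs `v₁ → v_{n-2}`,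
`v_{i+1} → vₙ` and `vₙ → v_{i-1}`. -/
def FpAdj (n i : ℕ) : Fin n → Fin n → Prop := fun a b =>
  (a.val = 0 ∧ b.val = n - 2) ∨ (a.val = b.val + 1 ∧ 1 ≤ a.val ∧ a.val ≤ n - 2) ∨
  (a.val = 0 ∧ b.val = n - 3) ∨ (a.val = i ∧ b.val = n - 1) ∨ (a.val = n - 1 ∧ b.val = i - 2)

/-- The digraph `𝓑₁`: `Cₙ` together with the arcs `v₁ → v_{n-3}` and `v₃ → v_{n-1}`. -/
def B1Adj (n : ℕ) : Fin n → Fin n → Prop := fun a b =>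
  CnAdj n a b ∨ (a.val = 0 ∧ b.val = n - 4) ∨ (a.val = 2 ∧ b.val = n - 2)

/-- The digraph `𝓑₂`: `Cₙ` together with the arcs `v₁ → v_{n-3}` and `v₄ → vₙ`. -/
def B2Adj (n : ℕ) : Fin n → Fin n → Prop := fun a b =>
  CnAdj n a b ∨ (a.val = 0 ∧ b.val = n - 4) ∨ (a.val = 3 ∧ b.val = n - 1)

/-- The digraph `𝓑₃`: `Cₙ` together with the arcs `v₁ → v_{n-3}`, `v₂ → v_{n-2}`
and `v₄ → vₙ`. -/
def B3Adj (n : ℕ) : Fin n → Fin n → Prop := fun a b =>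
  CnAdj n a b ∨ (a.val = 0 ∧ b.val = n - 4) ∨ (a.val = 1 ∧ b.val = n - 3) ∨
  (a.val = 3 ∧ b.val = n - 1)

/-- The digraph `𝓑₄`: `Cₙ` together with the arcs `v₁ → v_{n-3}`, `v₃ → v_{n-1}`
and `v₄ → vₙ`. -/
def B4Adj (n : ℕ) : Fin n → Fin n → Prop := fun a b =>
  CnAdj n a b ∨ (a.val = 0 ∧ b.val = n - 4) ∨ (a.val = 2 ∧ b.val = n - 2) ∨
  (a.val = 3 ∧ b.val = n - 1)

/-!
Switch the signs of `𝒮₇` by the signs `gauge v` of the descending paths `v → ⋯ → v₁`. After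
switching, every arc is positive except `v₁ → v_{n-1}`, which carries the sign
`σ₁ = cycleSign S (n - 2)` of the `(n-1)`-cycle, and `v₁ → v_{n-2}` and `v₃ → vₙ`, which both carry
the sign `σ₂ = cycleSign S (n - 3)` of the `(n-2)`-cycle through `v₁` (for `v₃ → vₙ` because the two
`(n-2)`-cycles have the same sign). So a walk of length `t` from `u` to `v` using the first kind of
arc `N` times and the other two `x` times has sign `gauge u * gauge v * σ₁ ^ N * σ₂ ^ x`, and
`t + v = u + N (n-1) + x (n-2)` in 0-based indices. If `σ₁ ^ (n-2) = σ₂ ^ (n-1)`, the sign would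
only depend on `t`, contradicting nonpowerfulness.

For `t = u + 2 (n-2)² - 1` and `v = v₁` the only solution is `(N, x) = (n-3, n-2)`, so there is no
SSSD pair. For `t ≥ u + 2 (n-2)²`, descend from `u` to `v₁` and then, since `(n-2)(n-3) - 1` is the
Frobenius number of `{n-1, n-2}`, reach any `v` both with counts `(M + n - 2, X)` and
`(M, X + n - 1)`; the signs of these two walks differ by the factor `σ₁ ^ (n-2) / σ₂ ^ (n-1) = -1`.
Hence `l(v) = v + 2 (n-2)²`, which is increasing in `v`.
-/

namespace SignedDigraph

variable {V : Type*} (S : SignedDigraph V)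

theorem sgn_mul_self {u v : V} (h : S.Adj u v) : S.sgn u v * S.sgn u v = 1 := by
  rcases S.sgn_unit u v h with h' | h' <;> simp [h']

theorem walkSign_zero (f : ℕ → V) : S.walkSign 0 f = 1 :=
  Finset.prod_range_zero _

theorem walkSign_succ (t : ℕ) (f : ℕ → V) :
    S.walkSign (t + 1) f = S.walkSign t f * S.sgn (f t) (f (t + 1)) :=
  Finset.prod_range_succ _ _

theorem walkSign_succ' (t : ℕ) (f : ℕ → V) :
    S.walkSign (t + 1) f = S.sgn (f 0) (f 1) * S.walkSign t (fun i => f (i + 1)) :=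
  (Finset.prod_range_succ' _ _).trans (mul_comm _ _)

theorem walkSign_eq_of_sgn_eq_mul (g : V → ℤ) (hg : ∀ v, g v * g v = 1) {t : ℕ} {f : ℕ → V}
    (h : ∀ i < t, S.sgn (f i) (f (i + 1)) = g (f i) * g (f (i + 1))) :
    S.walkSign t f = g (f 0) * g (f t) := by
  induction t with
  | zero => rw [walkSign_zero, hg]
  | succ t ih =>
    rw [walkSign_succ, ih fun i hi => h i (by omega), h t (by omega)]
    linear_combination g (f 0) * g (f (t + 1)) * hg (f t)

theorem walkSign_eq_of_forall_adj (g : V → ℤ) (hg : ∀ v, g v * g v = 1) (p : V → ℕ)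
    (α β : ℕ) (s r : ℤ)
    (harc : ∀ a b, S.Adj a b → ∃ N x : ℕ,
      1 + p b = p a + N * α + x * β ∧ S.sgn a b = g a * g b * s ^ N * r ^ x)
    {t : ℕ} {f : ℕ → V} (hf : IsWalk S.Adj t f) :
    ∃ N x : ℕ, t + p (f t) = p (f 0) + N * α + x * β ∧
      S.walkSign t f = g (f 0) * g (f t) * s ^ N * r ^ x := by
  induction t with
  | zero => exact ⟨0, 0, by simp, by simp [walkSign_zero, hg]⟩
  | succ t ih =>
    obtain ⟨N, x, hlen, hsgn⟩ := ih fun i hi => hf i (by omega)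
    obtain ⟨N', x', hlen', hsgn'⟩ := harc _ _ (hf t (by omega))
    refine ⟨N + N', x + x', by rw [add_mul, add_mul]; omega, ?_⟩
    rw [walkSign_succ, hsgn, hsgn', pow_add, pow_add]
    linear_combination g (f 0) * g (f (t + 1)) * s ^ N * r ^ x * s ^ N' * r ^ x' * hg (f t)

def HasSignedWalk (t : ℕ) (u v : V) (σ : ℤ) : Prop :=
  ∃ f : ℕ → V, f 0 = u ∧ f t = v ∧ IsWalk S.Adj t f ∧ S.walkSign t f = σ

variable {S}

theorem hasSignedWalk_zero (u : V) : S.HasSignedWalk 0 u u 1 :=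
  ⟨fun _ => u, rfl, rfl, fun _ h => absurd h (Nat.not_lt_zero _), walkSign_zero S _⟩

theorem hasSignedWalk_one {u v : V} (h : S.Adj u v) : S.HasSignedWalk 1 u v (S.sgn u v) :=
  ⟨fun i => if i = 0 then u else v, rfl, rfl, fun i hi => by simpa [show i = 0 by omega] using h,
    by simp [walkSign]⟩

theorem HasSignedWalk.trans {t₁ t₂ : ℕ} {u w v : V} {σ₁ σ₂ : ℤ}
    (h₁ : S.HasSignedWalk t₁ u w σ₁) (h₂ : S.HasSignedWalk t₂ w v σ₂) :
    S.HasSignedWalk (t₁ + t₂) u v (σ₁ * σ₂) := by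
  obtain ⟨f, hf0, hft, hfw, rfl⟩ := h₁
  obtain ⟨g, hg0, hgt, hgw, rfl⟩ := h₂
  set F : ℕ → V := fun i => if i ≤ t₁ then f i else g (i - t₁) with hF
  have hlow : ∀ i ≤ t₁, F i = f i := fun i hi => if_pos hi
  have hhigh : ∀ i, F (t₁ + i) = g i := by
    intro i
    rcases Nat.eq_zero_or_pos i with rfl | hi
    · simp [hF, hft, hg0]
    · simp [hF, show ¬ t₁ + i ≤ t₁ by omega]
  refine ⟨F, by simp [hF, hf0], by rw [hhigh, hgt], ?_, ?_⟩
  · intro i hi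
    rcases Nat.lt_or_ge i t₁ with h | h
    · rw [hlow i h.le, hlow (i + 1) h]
      exact hfw i h
    · obtain ⟨j, rfl⟩ := Nat.exists_eq_add_of_le h
      rw [hhigh, show t₁ + j + 1 = t₁ + (j + 1) by omega, hhigh]
      exact hgw j (by omega)
  · rw [walkSign, Finset.prod_range_add]
    congr 1
    · exact Finset.prod_congr rfl fun i hi => by
        rw [hlow i (Finset.mem_range.1 hi).le, hlow (i + 1) (Finset.mem_range.1 hi)]
    · exact Finset.prod_congr rfl fun i _ => by
        rw [hhigh, show t₁ + i + 1 = t₁ + (i + 1) by omega, hhigh]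

theorem HasSignedWalk.hasSSSD {t : ℕ} {u v : V} {σ τ : ℤ} (h₁ : S.HasSignedWalk t u v σ)
    (h₂ : S.HasSignedWalk t u v τ) (hne : σ ≠ τ) : S.HasSSSD t u v := by
  obtain ⟨f, hf0, hft, hfw, rfl⟩ := h₁
  obtain ⟨g, hg0, hgt, hgw, rfl⟩ := h₂
  exact ⟨f, g, ⟨hf0, hft, hfw⟩, ⟨hg0, hgt, hgw⟩, hne⟩

theorem localBase_eq_of {u : V} {L : ℕ} (hL : 0 < L) (hge : ∀ t ≥ L, ∀ v, S.HasSSSD t u v)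
    (hprev : ¬ ∀ v, S.HasSSSD (L - 1) u v) : S.localBase u = L := by
  unfold localBase
  refine le_antisymm (Nat.sInf_le fun t ht v => hge t ht v) (le_of_not_gt fun hlt => hprev ?_)
  exact Nat.sInf_mem (s := {l | ∀ t ≥ l, ∀ v, S.HasSSSD t u v}) ⟨L, hge⟩ (L - 1) (by omega)

end SignedDigraph

theorem kthSmallest_of_monotone {n : ℕ} {f : Fin n → ℕ} (hf : Monotone f) (i : Fin n) :
    kthSmallest f (i.val + 1) = f i := by
  have hsorted : (List.ofFn f).Pairwise (· ≤ ·) :=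
    List.pairwise_ofFn.2 fun _ _ hij => hf hij.le
  rw [kthSmallest, Fin.univ_val_map, Multiset.coe_sort, List.mergeSort_eq_self _ hsorted,
    Nat.add_sub_cancel, List.getD_eq_getElem _ _ (by simp), List.getElem_ofFn]

theorem pow_mul_pow_eq_pow {M : Type*} [CommMonoid M] {s r : M} (hs : s * s = 1)
    (hr : r * r = 1) {β : ℕ} (h : s ^ β = r ^ (β + 1)) (N x : ℕ) :
    s ^ N * r ^ x = (s * r) ^ (N * (β + 1) + x * β) := by
  have hs' : (s * r) ^ (β + 1) = s := by
    rw [mul_pow, ← h, ← pow_add, show β + 1 + β = 2 * β + 1 by omega, pow_succ, pow_mul, sq, hs,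
      one_pow, one_mul]
  have hr' : (s * r) ^ β = r := by
    rw [mul_pow, h, ← pow_add, show β + 1 + β = 2 * β + 1 by omega, pow_succ, pow_mul, sq, hr,
      one_pow, one_mul]
  rw [pow_add, mul_comm N, mul_comm x, pow_mul, pow_mul, hs', hr']

theorem mul_pow_add_mul_pow_ne {R : Type*} [CommRing R] [NoZeroDivisors R] {c s r : R}
    (hc : c ≠ 0) (hs : s ≠ 0) (hr : r ≠ 0) {p q : ℕ} (h : s ^ p ≠ r ^ q) (M X : ℕ) :
    c * s ^ (M + p) * r ^ X ≠ c * s ^ M * r ^ (X + q) := by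
  intro heq
  refine h (mul_left_cancel₀
    (mul_ne_zero (mul_ne_zero hc (pow_ne_zero M hs)) (pow_ne_zero X hr)) ?_)
  rw [pow_add, pow_add] at heq
  linear_combination heq

theorem eq_of_mul_add_one_add_mul_eq {m N x : ℕ} (h : N * (m + 1) + x * m + 1 = 2 * m ^ 2) :
    N + 1 = m ∧ x = m := by
  have hz : ((N : ℤ) + 1) = m * (2 * m - N - x) := by
    have h' : (N : ℤ) * (m + 1) + x * m + 1 = 2 * m ^ 2 := by exact_mod_cast h
    linear_combination h'
  have hk : 2 * (m : ℤ) - N - x = 1 := by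
    rcases lt_trichotomy (2 * (m : ℤ) - N - x) 1 with hk | hk | hk
    · nlinarith
    · exact hk
    · nlinarith
  constructor <;> zify <;> nlinarith

theorem exists_mul_add_one_add_mul_eq {m c : ℕ} (hc : m * (m - 1) ≤ c) :
    ∃ a b : ℕ, a * (m + 1) + b * m = c :=
  Nat.exists_add_mul_eq_of_gcd_dvd_of_mul_pred_le (m + 1) m c (by simp) (by simpa using hc)

namespace F7

open SignedDigraph Fin.NatCast

variable {n : ℕ} {S : SignedDigraph (Fin n)}

theorem adj_of_val_eq_succ (hadj : S.Adj = F7Adj n) {a b : Fin n} (h : a.val = b.val + 1) :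
    S.Adj a b := by
  rw [hadj, F7Adj]
  omega

theorem exists_counts (hn : 6 ≤ n) (v : Fin n) {D : ℕ} (hD : 2 * (n - 2) ^ 2 ≤ D) :
    ∃ M X : ℕ, D + v.val = (M + (n - 2)) * (n - 1) + X * (n - 2) ∧ (v.val ≠ n - 1 ∨ 1 ≤ X) := by
  have hsq : 2 * (n - 2) ^ 2 = (n - 2) * (n - 1) + (n - 2) * (n - 3) := by
    obtain ⟨k, rfl⟩ : ∃ k, n = k + 3 := ⟨n - 3, by omega⟩
    rw [show k + 3 - 2 = k + 1 by omega, show k + 3 - 1 = k + 2 by omega, Nat.add_sub_cancel]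
    ring
  have hfrob : ∀ c, (n - 2) * (n - 3) ≤ c → ∃ a b : ℕ, a * (n - 1) + b * (n - 2) = c := by
    intro c hc
    rw [show n - 1 = n - 2 + 1 by omega]
    exact exists_mul_add_one_add_mul_eq (by rwa [show n - 2 - 1 = n - 3 by omega])
  by_cases hv : v.val = n - 1
  · obtain ⟨a, b, hab⟩ := hfrob (D + v.val - (n - 2) * (n - 1) - (n - 2)) (by omega)
    exact ⟨a, b + 1, by rw [add_mul, add_mul]; omega, Or.inr (by omega)⟩
  · obtain ⟨a, b, hab⟩ := hfrob (D + v.val - (n - 2) * (n - 1)) (by omega)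
    exact ⟨a, b, by rw [add_mul]; omega, Or.inl hv⟩

variable [NeZero n]

variable (S)

def descSign (j : ℕ) : ℤ := S.walkSign j fun i => ((j - i : ℕ) : Fin n)

def gauge (v : Fin n) : ℤ := descSign S v.val

/-- The sign of the cycle `v₁ → v_{j+1} → v_j → ⋯ → v₁` (when `v₁ → v_{j+1}` is an arc). -/
def cycleSign (j : ℕ) : ℤ := S.sgn 0 (j : Fin n) * descSign S j

variable {S}

theorem descSign_succ (j : ℕ) :
    descSign S (j + 1) = S.sgn ((j + 1 : ℕ) : Fin n) (j : Fin n) * descSign S j := by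
  simp only [descSign, walkSign_succ', Nat.sub_zero, Nat.add_sub_add_right, Nat.add_sub_cancel]

theorem gauge_zero : gauge S 0 = 1 := by
  simp [gauge, descSign, walkSign_zero]

theorem descSign_mul_self (hadj : S.Adj = F7Adj n) {j : ℕ} (hj : j < n) :
    descSign S j * descSign S j = 1 := by
  induction j with
  | zero => simp [descSign, walkSign_zero]
  | succ j ih =>
    have harc : S.Adj ((j + 1 : ℕ) : Fin n) (j : Fin n) :=
      adj_of_val_eq_succ hadj (by rw [Fin.val_cast_of_lt hj, Fin.val_cast_of_lt (by omega)])
    rw [descSign_succ]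
    linear_combination (descSign S j * descSign S j) * S.sgn_mul_self harc + ih (by omega)

theorem gauge_mul_self (hadj : S.Adj = F7Adj n) (v : Fin n) : gauge S v * gauge S v = 1 :=
  descSign_mul_self hadj v.isLt

theorem cycleSign_mul_self (hadj : S.Adj = F7Adj n) {b : Fin n} (hb : S.Adj 0 b) :
    cycleSign S b.val * cycleSign S b.val = 1 := by
  rw [cycleSign, Fin.cast_val_eq_self, mul_mul_mul_comm, S.sgn_mul_self hb,
    descSign_mul_self hadj b.isLt, one_mul]

theorem sgn_eq_of_val_eq_succ (hadj : S.Adj = F7Adj n) {a b : Fin n} (h : a.val = b.val + 1) :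
    S.sgn a b = gauge S a * gauge S b := by
  have ha : ((b.val + 1 : ℕ) : Fin n) = a := Fin.ext (by rw [Fin.val_cast_of_lt (by omega), h])
  rw [gauge, gauge, h, descSign_succ, ha, Fin.cast_val_eq_self]
  linear_combination (-S.sgn a b) * descSign_mul_self hadj b.isLt

theorem sgn_eq_cycleSign (hadj : S.Adj = F7Adj n) {a b : Fin n} (ha : a.val = 0) :
    S.sgn a b = gauge S a * gauge S b * cycleSign S b.val := by
  obtain rfl : a = 0 := Fin.ext (by simp [ha])
  rw [gauge_zero, cycleSign, gauge, Fin.cast_val_eq_self]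
  linear_combination (-S.sgn 0 b) * descSign_mul_self hadj b.isLt

/-- For `a = 0` and `a = 2` these are the two `(n-2)`-cycles `v₁ → v_{n-2} → v_{n-3} → ⋯ → v₁`
and `v₃ → vₙ → v_{n-1} → ⋯ → v₃`. -/
def shortCycle (n a : ℕ) [NeZero n] (i : ℕ) : Fin n :=
  if i = 0 then (a : Fin n) else ((a + (n - 2) - i : ℕ) : Fin n)

theorem val_shortCycle_zero (hn : 6 ≤ n) (a : ℕ) (ha : a ≤ 2) : (shortCycle n a 0).val = a :=
  Fin.val_cast_of_lt (by omega)

theorem val_shortCycle_succ (hn : 6 ≤ n) (a : ℕ) (ha : a ≤ 2) (i : ℕ) :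
    (shortCycle n a (i + 1)).val = a + (n - 2) - (i + 1) :=
  Fin.val_cast_of_lt (by omega)

theorem isCycle_shortCycle (hn : 6 ≤ n) (hadj : S.Adj = F7Adj n) {a : ℕ} (ha : a = 0 ∨ a = 2) :
    IsCycle S.Adj (n - 2) (shortCycle n a) := by
  have h₀ := val_shortCycle_zero hn a (by omega)
  have hsucc := val_shortCycle_succ hn a (by omega)
  refine ⟨fun i hi => ?_, Fin.ext ?_, fun i hi j hj hij => ?_⟩
  · rw [hadj, F7Adj, hsucc]
    rcases i with _ | i
    · rw [h₀]; omega
    · rw [hsucc]; omega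
  · rw [show n - 2 = n - 3 + 1 by omega, hsucc, h₀]
    omega
  · have := congrArg Fin.val hij
    rcases i with _ | i <;> rcases j with _ | j <;> simp only [h₀, hsucc] at this <;> omega

theorem walkSign_shortCycle (hn : 6 ≤ n) (hadj : S.Adj = F7Adj n) {a : ℕ} (ha : a = 0 ∨ a = 2) :
    S.walkSign (n - 2) (shortCycle n a) =
      S.sgn (shortCycle n a 0) (shortCycle n a 1) *
        (gauge S (shortCycle n a 1) * gauge S (shortCycle n a 0)) := by
  have hclose := (isCycle_shortCycle hn hadj ha).2.1
  rw [show n - 2 = n - 3 + 1 by omega] at hclose ⊢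
  rw [walkSign_succ', S.walkSign_eq_of_sgn_eq_mul (gauge S) (gauge_mul_self hadj), hclose]
  intro i hi
  apply sgn_eq_of_val_eq_succ hadj
  rw [val_shortCycle_succ hn a (by omega), val_shortCycle_succ hn a (by omega)]
  omega

theorem sgn_eq_cycleSign_of_jump (hn : 6 ≤ n) (hadj : S.Adj = F7Adj n)
    (h2 : S.SameSignCycles (n - 2)) {a b : Fin n} (ha : a.val = 2) (hb : b.val = n - 1) :
    S.sgn a b = gauge S a * gauge S b * cycleSign S (n - 3) := by
  have hW₀ : S.walkSign (n - 2) (shortCycle n 0) = cycleSign S (n - 3) := by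
    have h₁ : (shortCycle n 0 1).val = n - 3 := by
      rw [val_shortCycle_succ hn 0 (by omega)]
      omega
    rw [walkSign_shortCycle hn hadj (Or.inl rfl),
      sgn_eq_cycleSign hadj (val_shortCycle_zero hn 0 (by omega)), h₁]
    linear_combination
      (cycleSign S (n - 3) * gauge S (shortCycle n 0 1) * gauge S (shortCycle n 0 1)) *
        gauge_mul_self hadj (shortCycle n 0 0) +
      cycleSign S (n - 3) * gauge_mul_self hadj (shortCycle n 0 1)
  have hW₂ : S.walkSign (n - 2) (shortCycle n 2) = S.sgn a b * (gauge S b * gauge S a) := by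
    rw [walkSign_shortCycle hn hadj (Or.inr rfl),
      show shortCycle n 2 0 = a from Fin.ext (by rw [val_shortCycle_zero hn 2 le_rfl, ha]),
      show shortCycle n 2 1 = b from Fin.ext (by rw [val_shortCycle_succ hn 2 le_rfl, hb]; omega)]
  rw [← hW₀, h2 _ _ (isCycle_shortCycle hn hadj (Or.inl rfl))
    (isCycle_shortCycle hn hadj (Or.inr rfl)), hW₂]
  linear_combination (-S.sgn a b * gauge S b * gauge S b) * gauge_mul_self hadj a +
    (-S.sgn a b) * gauge_mul_self hadj b

theorem exists_sgn_eq_of_adj (hn : 6 ≤ n) (hadj : S.Adj = F7Adj n)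
    (h2 : S.SameSignCycles (n - 2)) {a b : Fin n} (hab : S.Adj a b) :
    ∃ N x : ℕ, 1 + b.val = a.val + N * (n - 1) + x * (n - 2) ∧
      S.sgn a b = gauge S a * gauge S b * cycleSign S (n - 2) ^ N * cycleSign S (n - 3) ^ x := by
  rw [hadj] at hab
  rcases hab with ⟨ha, hb⟩ | ⟨hab, -⟩ | ⟨ha, hb⟩ | ⟨ha, hb⟩ | ⟨ha, hb⟩
  · exact ⟨1, 0, by omega, by simp [sgn_eq_cycleSign hadj ha, hb]⟩
  · exact ⟨0, 0, by omega, by simp [sgn_eq_of_val_eq_succ hadj hab]⟩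
  · exact ⟨0, 1, by omega, by simp [sgn_eq_cycleSign hadj ha, hb]⟩
  · exact ⟨0, 1, by omega, by simp [sgn_eq_cycleSign_of_jump hn hadj h2 ha hb]⟩
  · exact ⟨0, 0, by omega, by simp [sgn_eq_of_val_eq_succ hadj (by omega : a.val = b.val + 1)]⟩

theorem exists_walkSign_eq (hn : 6 ≤ n) (hadj : S.Adj = F7Adj n)
    (h2 : S.SameSignCycles (n - 2)) {t : ℕ} {f : ℕ → Fin n} (hf : IsWalk S.Adj t f) :
    ∃ N x : ℕ, t + (f t).val = (f 0).val + N * (n - 1) + x * (n - 2) ∧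
      S.walkSign t f =
        gauge S (f 0) * gauge S (f t) * cycleSign S (n - 2) ^ N * cycleSign S (n - 3) ^ x :=
  S.walkSign_eq_of_forall_adj (gauge S) (gauge_mul_self hadj) Fin.val _ _ _ _
    (fun _ _ => exists_sgn_eq_of_adj hn hadj h2) hf

theorem cycleSign_mul_self_of_eq (hn : 6 ≤ n) (hadj : S.Adj = F7Adj n) {j : ℕ}
    (hj : j = n - 2 ∨ j = n - 3) : cycleSign S j * cycleSign S j = 1 :=
  cycleSign_mul_self hadj (b := ⟨j, by omega⟩)
    (by rw [hadj, F7Adj]; simp only [Fin.val_zero, true_and]; omega)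

theorem cycleSign_pow_ne (hn : 6 ≤ n) (hadj : S.Adj = F7Adj n)
    (hpn : S.IsPrimitiveNonpowerful) (h2 : S.SameSignCycles (n - 2)) :
    cycleSign S (n - 2) ^ (n - 2) ≠ cycleSign S (n - 3) ^ (n - 1) := by
  intro h
  have hpow := pow_mul_pow_eq_pow (cycleSign_mul_self_of_eq hn hadj (Or.inl rfl))
    (cycleSign_mul_self_of_eq hn hadj (Or.inr rfl)) (β := n - 2)
    (by rwa [show n - 2 + 1 = n - 1 by omega])
  simp only [show n - 2 + 1 = n - 1 by omega] at hpow
  obtain ⟨l, -, hl⟩ := hpn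
  obtain ⟨f, g, ⟨hf0, hft, hf⟩, ⟨hg0, hgt, hg⟩, hne⟩ := hl l le_rfl 0 0
  obtain ⟨N, x, hlen, hsgn⟩ := exists_walkSign_eq hn hadj h2 hf
  obtain ⟨N', x', hlen', hsgn'⟩ := exists_walkSign_eq hn hadj h2 hg
  simp only [hf0, hft, hg0, hgt, Fin.val_zero, add_zero, zero_add] at hlen hlen' hsgn hsgn'
  apply hne
  rw [hsgn, hsgn', mul_assoc, mul_assoc _ (cycleSign S (n - 2) ^ N'), hpow, hpow, ← hlen, ← hlen']

theorem not_hasSSSD_zero (hn : 6 ≤ n) (hadj : S.Adj = F7Adj n) (h2 : S.SameSignCycles (n - 2))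
    (u : Fin n) : ¬ S.HasSSSD (u.val + 2 * (n - 2) ^ 2 - 1) u 0 := by
  rintro ⟨f, g, ⟨hf0, hft, hf⟩, ⟨hg0, hgt, hg⟩, hne⟩
  have hcounts : ∀ {N x : ℕ}, u.val + 2 * (n - 2) ^ 2 - 1 + (0 : Fin n).val =
      u.val + N * (n - 1) + x * (n - 2) → N + 1 = n - 2 ∧ x = n - 2 := by
    intro N x h
    apply eq_of_mul_add_one_add_mul_eq
    have : 1 ≤ (n - 2) ^ 2 := Nat.one_le_pow _ _ (by omega)
    rw [show n - 2 + 1 = n - 1 by omega]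
    simp only [Fin.val_zero] at h
    omega
  obtain ⟨N, x, hlen, hsgn⟩ := exists_walkSign_eq hn hadj h2 hf
  obtain ⟨N', x', hlen', hsgn'⟩ := exists_walkSign_eq hn hadj h2 hg
  rw [hf0, hft] at hlen hsgn
  rw [hg0, hgt] at hlen' hsgn'
  obtain ⟨hN, hx⟩ := hcounts hlen
  obtain ⟨hN', hx'⟩ := hcounts hlen'
  exact hne (by rw [hsgn, hsgn', show N = N' by omega, show x = x' by omega])

variable (S) in
def HasSwitchedWalk (t : ℕ) (u v : Fin n) (N x : ℕ) : Prop :=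
  S.HasSignedWalk t u v
    (gauge S u * gauge S v * cycleSign S (n - 2) ^ N * cycleSign S (n - 3) ^ x)

theorem HasSwitchedWalk.trans (hadj : S.Adj = F7Adj n) {t₁ t₂ N₁ N₂ x₁ x₂ : ℕ}
    {u w v : Fin n} (h₁ : HasSwitchedWalk S t₁ u w N₁ x₁) (h₂ : HasSwitchedWalk S t₂ w v N₂ x₂) :
    HasSwitchedWalk S (t₁ + t₂) u v (N₁ + N₂) (x₁ + x₂) := by
  unfold HasSwitchedWalk at *
  convert HasSignedWalk.trans h₁ h₂ using 1
  rw [pow_add, pow_add]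
  linear_combination (-(gauge S u * gauge S v * cycleSign S (n - 2) ^ N₁ *
    cycleSign S (n - 2) ^ N₂ * cycleSign S (n - 3) ^ x₁ * cycleSign S (n - 3) ^ x₂)) *
      gauge_mul_self hadj w

theorem hasSwitchedWalk_one (N x : ℕ) {a b : Fin n} (hab : S.Adj a b)
    (h : S.sgn a b = gauge S a * gauge S b * cycleSign S (n - 2) ^ N * cycleSign S (n - 3) ^ x) :
    HasSwitchedWalk S 1 a b N x := by
  rw [HasSwitchedWalk, ← h]
  exact hasSignedWalk_one hab

theorem hasSwitchedWalk_of_val_eq_add (hadj : S.Adj = F7Adj n) (k : ℕ) {a b : Fin n}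
    (h : a.val = b.val + k) : HasSwitchedWalk S k a b 0 0 := by
  induction k generalizing b with
  | zero =>
    obtain rfl : a = b := Fin.ext h
    simpa [HasSwitchedWalk, gauge_mul_self hadj] using hasSignedWalk_zero (S := S) a
  | succ k ih =>
    let c : Fin n := ⟨b.val + 1, by omega⟩
    have hcb : c.val = b.val + 1 := rfl
    exact (ih (b := c) (by omega)).trans hadj (hasSwitchedWalk_one 0 0
      (adj_of_val_eq_succ hadj hcb) (by rw [sgn_eq_of_val_eq_succ hadj hcb]; ring))

theorem hasSwitchedWalk_long (hn : 6 ≤ n) (hadj : S.Adj = F7Adj n) {v : Fin n}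
    (hv : v.val ≤ n - 2) : HasSwitchedWalk S (n - 1 - v.val) 0 v 1 0 := by
  let b : Fin n := ⟨n - 2, by omega⟩
  have harc : S.Adj 0 b := by rw [hadj, F7Adj]; simp [b]
  convert (hasSwitchedWalk_one 1 0 harc (by rw [sgn_eq_cycleSign hadj (by simp)]; ring)).trans
    hadj (hasSwitchedWalk_of_val_eq_add hadj (n - 2 - v.val) (a := b) (b := v)
      (by simp only [b]; omega)) using 1
  omega

theorem hasSwitchedWalk_short (hn : 6 ≤ n) (hadj : S.Adj = F7Adj n) {v : Fin n}
    (hv : v.val ≤ n - 3) : HasSwitchedWalk S (n - 2 - v.val) 0 v 0 1 := by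
  let b : Fin n := ⟨n - 3, by omega⟩
  have harc : S.Adj 0 b := by rw [hadj, F7Adj]; simp [b]
  convert (hasSwitchedWalk_one 0 1 harc (by rw [sgn_eq_cycleSign hadj (by simp)]; ring)).trans
    hadj (hasSwitchedWalk_of_val_eq_add hadj (n - 3 - v.val) (a := b) (b := v)
      (by simp only [b]; omega)) using 1
  omega

theorem HasSwitchedWalk.jump (hn : 6 ≤ n) (hadj : S.Adj = F7Adj n)
    (h2 : S.SameSignCycles (n - 2)) {N x ℓ : ℕ} (h : HasSwitchedWalk S ℓ 0 ⟨2, by omega⟩ N x)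
    (v : Fin n) : HasSwitchedWalk S (ℓ + 1 + (n - 1 - v.val)) 0 v N (x + 1) := by
  let a : Fin n := ⟨2, by omega⟩
  let b : Fin n := ⟨n - 1, by omega⟩
  have harc : S.Adj a b := by rw [hadj, F7Adj]; simp [a, b]
  simpa using (h.trans hadj (hasSwitchedWalk_one 0 1 harc
    (by rw [sgn_eq_cycleSign_of_jump hn hadj h2 rfl rfl]; ring))).trans hadj
    (hasSwitchedWalk_of_val_eq_add hadj (n - 1 - v.val) (a := b) (b := v)
      (by simp only [b]; omega))

theorem hasSwitchedWalk_loops (hn : 6 ≤ n) (hadj : S.Adj = F7Adj n) (N x : ℕ) :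
    HasSwitchedWalk S (N * (n - 1) + x * (n - 2)) 0 0 N x := by
  induction N with
  | zero =>
    induction x with
    | zero => simpa using hasSwitchedWalk_of_val_eq_add hadj 0 (a := 0) (b := 0) rfl
    | succ x ih =>
      convert ih.trans hadj (hasSwitchedWalk_short hn hadj (v := 0) (by simp)) using 1
      simp [add_mul]
  | succ N ih =>
    convert ih.trans hadj (hasSwitchedWalk_long hn hadj (v := 0) (by simp)) using 1
    · simp [add_mul]
      omega
    · simp

theorem hasSwitchedWalk_of_counts (hn : 6 ≤ n) (hadj : S.Adj = F7Adj n)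
    (h2 : S.SameSignCycles (n - 2)) {t N x : ℕ} {v : Fin n}
    (hcounts : (1 ≤ N ∧ v.val ≠ n - 1) ∨ (1 ≤ N ∧ 1 ≤ x) ∨ 2 ≤ x)
    (ht : t + v.val = N * (n - 1) + x * (n - 2)) : HasSwitchedWalk S t 0 v N x := by
  have hv := v.isLt
  have hloops : ∀ {ℓ N₀ x₀ : ℕ}, HasSwitchedWalk S ℓ 0 v N₀ x₀ →
      ℓ + v.val = N₀ * (n - 1) + x₀ * (n - 2) → N₀ ≤ N → x₀ ≤ x →
        HasSwitchedWalk S t 0 v N x := by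
    intro ℓ N₀ x₀ hleg hℓ hN hx
    obtain ⟨N', rfl⟩ := Nat.exists_eq_add_of_le' hN
    obtain ⟨x', rfl⟩ := Nat.exists_eq_add_of_le' hx
    convert (hasSwitchedWalk_loops hn hadj N' x').trans hadj hleg using 1
    rw [add_mul, add_mul] at ht
    omega
  have hlong := hasSwitchedWalk_long hn hadj (v := ⟨2, by omega⟩) (by simp only; omega)
  have hshort := hasSwitchedWalk_short hn hadj (v := ⟨2, by omega⟩) (by simp only; omega)
  -- loops at `v₁`, followed by `v₁ → v_{n-1} ⇝ v`, by `v₁ → v_{n-1} ⇝ v₃ → vₙ ⇝ v`,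
  -- or by `v₁ → v_{n-2} ⇝ v₃ → vₙ ⇝ v`
  rcases hcounts with ⟨hN, hv'⟩ | ⟨hN, hx⟩ | hx
  · exact hloops (hasSwitchedWalk_long hn hadj (by omega)) (by omega) hN (Nat.zero_le _)
  · exact hloops (hlong.jump hn hadj h2 v) (by simp only; omega) hN hx
  · exact hloops (hshort.jump hn hadj h2 v) (by simp only; omega) (Nat.zero_le _) hx

theorem hasSSSD_of_le (hn : 6 ≤ n) (hadj : S.Adj = F7Adj n) (hpn : S.IsPrimitiveNonpowerful)
    (h2 : S.SameSignCycles (n - 2)) {t : ℕ} (u v : Fin n) (ht : u.val + 2 * (n - 2) ^ 2 ≤ t) :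
    S.HasSSSD t u v := by
  obtain ⟨M, X, hlen, hX⟩ := exists_counts hn v (D := t - u.val) (by omega)
  have hdesc := hasSwitchedWalk_of_val_eq_add hadj u.val (a := u) (b := 0) (by simp)
  have h₁ := hdesc.trans hadj
    (hasSwitchedWalk_of_counts hn hadj h2 (N := M + (n - 2)) (x := X) (by omega) hlen)
  have h₂ := hdesc.trans hadj (hasSwitchedWalk_of_counts hn hadj h2 (N := M) (x := X + (n - 1))
    (by omega) (by rw [hlen]; ring))
  rw [Nat.add_sub_cancel' (by omega)] at h₁ h₂
  refine HasSignedWalk.hasSSSD h₁ h₂ ?_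
  simp only [zero_add]
  have hne : ∀ {y : ℤ}, y * y = 1 → y ≠ 0 := fun h => left_ne_zero_of_mul_eq_one h
  exact mul_pow_add_mul_pow_ne
    (mul_ne_zero (hne (gauge_mul_self hadj u)) (hne (gauge_mul_self hadj v)))
    (hne (cycleSign_mul_self_of_eq hn hadj (Or.inl rfl)))
    (hne (cycleSign_mul_self_of_eq hn hadj (Or.inr rfl))) (cycleSign_pow_ne hn hadj hpn h2) M X

theorem localBase_eq (hn : 6 ≤ n) (hadj : S.Adj = F7Adj n) (hpn : S.IsPrimitiveNonpowerful)
    (h2 : S.SameSignCycles (n - 2)) (u : Fin n) :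
    S.localBase u = u.val + 2 * (n - 2) ^ 2 :=
  localBase_eq_of (Nat.add_pos_right _ (Nat.mul_pos two_pos (pow_pos (by omega) 2)))
    (fun _ ht v => hasSSSD_of_le hn hadj hpn h2 u v ht) fun h => not_hasSSSD_zero hn hadj h2 u (h 0)

end F7

/-- Let `n ≥ 6` and let `𝒮₇` be a primitive nonpowerful signed
digraph with underlying digraph `F₇`, in which all cycles of length `n-1` have
the same sign and all cycles of length `n-2` have the same sign. Then
`l(k) = l(v_k) = 2n²-8n+7+k` for every `1 ≤ k ≤ n`. -/
theorem stmt7 (n : ℕ) (hn : 6 ≤ n)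
    (S : SignedDigraph (Fin n)) (hadj : S.Adj = F7Adj n)
    (hpn : S.IsPrimitiveNonpowerful)
    (h2 : S.SameSignCycles (n - 2)) :
    ∀ k : ℕ, ∀ _hk1 : 1 ≤ k, ∀ _hk2 : k ≤ n,
      kthSmallest S.localBase k = S.localBase ⟨k - 1, by omega⟩ ∧
      S.localBase ⟨k - 1, by omega⟩ = 2 * n ^ 2 - 8 * n + 7 + k := by
  have : NeZero n := ⟨by omega⟩
  intro k hk1 hk2
  have hbase := F7.localBase_eq hn hadj hpn h2
  have hmono : Monotone S.localBase := fun u v huv => by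
    rw [hbase, hbase]
    exact Nat.add_le_add_right huv _
  refine ⟨?_, ?_⟩
  · simpa [Nat.sub_add_cancel hk1] using kthSmallest_of_monotone hmono ⟨k - 1, by omega⟩
  · have hsq : 2 * (n - 2) ^ 2 + 8 * n = 2 * n ^ 2 + 8 := by
      obtain ⟨m, rfl⟩ : ∃ m, n = m + 2 := ⟨n - 2, by omega⟩
      rw [Nat.add_sub_cancel]
      ring
    have hn2 : 4 * n ≤ n ^ 2 := by nlinarith
    rw [hbase]
    dsimp only
    omega
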